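/- Let χ be a characteristic function with parameters r, d, and let a, b ∈ ℕ^d satisfy a ≤ b, 1 ≤ χ(b), χ(a) ≤ r−1, and [a] ≠ [b]. Then the pair ([a], [b]) lies in the transitive closure of the relation I_χ on P_χ. -/

import Mathlib

/-- Two points of `ℕ^d` are *adjacent*: they agree in all but one coordinate,
where they differ by exactly `1`. -/
def GridAdj {d : ℕ} (a b : Fin d → ℕ) : Prop :=
  ∃ j : Fin d, (∀ i : Fin d, i ≠ j → a i = b i) ∧ (a j = b j + 1 ∨ b j = a j + 1)

/-- The connected component of `a` inside the level set `χ⁻¹({χ a})`: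
all points reachable from `a` by paths of adjacent points on which `χ` keeps the value `χ a`. -/
def CompOf {d : ℕ} (χ : (Fin d → ℕ) → ℤ) (a : Fin d → ℕ) : Set (Fin d → ℕ) :=
  {b | Relation.ReflTransGen (fun x y => GridAdj x y ∧ χ x = χ a ∧ χ y = χ a) a b}

/-- `P_χ`: the set of connected components of the level sets `χ⁻¹({r - i})` for `1 ≤ i ≤ r - 1`,
i.e. components of level sets whose value lies in `[1, r-1]`. -/
def Pchi {d : ℕ} (r : ℕ) (χ : (Fin d → ℕ) → ℤ) : Set (Set (Fin d → ℕ)) :=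
  {p | ∃ a : Fin d → ℕ, 1 ≤ χ a ∧ χ a ≤ (r : ℤ) - 1 ∧ p = CompOf χ a}

/-- The incidence relation `I_χ` on components: `(p, q) ∈ I_χ` iff `d(p) < d(q)`
(equivalently, the `χ`-value on `p` exceeds that on `q`) and there are adjacent
`a ∈ p`, `b ∈ q` with `a ≤ b`. -/
def Ichi {d : ℕ} (χ : (Fin d → ℕ) → ℤ) (p q : Set (Fin d → ℕ)) : Prop :=
  ∃ a ∈ p, ∃ b ∈ q, GridAdj a b ∧ a ≤ b ∧ χ b < χ a

/-- A *characteristic function* with parameters `r, d`: `0 ≤ χ ≤ r`, finite support,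
and antitone for the componentwise order on `ℕ^d`. -/
def IsCharFun (r d : ℕ) (χ : (Fin d → ℕ) → ℤ) : Prop :=
  (∀ a, 0 ≤ χ a ∧ χ a ≤ (r : ℤ)) ∧ (Function.support χ).Finite ∧
    ∀ a b : Fin d → ℕ, a ≤ b → χ b ≤ χ a

/-- A rank `kk` incidence structure: a finite set `P` partitioned by the degree map
`deg : P → {1, …, kk}` together with a relation `I` only relating elements of
strictly increasing degree. -/
structure IncStruct (kk : ℕ) where
  P : Type
  finP : Finite P
  deg : P → ℕ
  deg_pos : ∀ p, 1 ≤ deg p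
  deg_le : ∀ p, deg p ≤ kk
  I : P → P → Prop
  I_lt : ∀ p q, I p q → deg p < deg q

/-- The incidence structure `S_χ` associated to a characteristic function `χ`
(with parameters `r, d`) is *equivalent* to the incidence structure `S`:
there is a degree-preserving bijection between `P_χ` and `S.P` under which
`I_χ` and `S.I` have the same transitive closure. -/
def EquivToSchi {d : ℕ} (r : ℕ) (χ : (Fin d → ℕ) → ℤ) {kk : ℕ} (S : IncStruct kk) : Prop :=
  ∃ e : {p : Set (Fin d → ℕ) // p ∈ Pchi r χ} ≃ S.P,
    (∀ p : {p : Set (Fin d → ℕ) // p ∈ Pchi r χ}, ∀ a ∈ p.1,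
      (S.deg (e p) : ℤ) = (r : ℤ) - χ a) ∧
    ∀ p q : {p : Set (Fin d → ℕ) // p ∈ Pchi r χ},
      Relation.TransGen
          (fun u v : {p : Set (Fin d → ℕ) // p ∈ Pchi r χ} => Ichi χ u.1 v.1) p q ↔
        Relation.TransGen S.I (e p) (e q)

/-!
Walk from `a` up to `b` one coordinate step at a time. Since `χ` is antitone, each step either
stays in the current level-set component or strictly lowers `χ`, and the latter is an `I_χ`-edge
between components whose values lie in `[χ b, χ a] ⊆ [1, r - 1]`.
-/

section

variable {d : ℕ}

theorem GridAdj.symm {a b : Fin d → ℕ} (h : GridAdj a b) : GridAdj b a := by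
  obtain ⟨j, hj, hstep⟩ := h
  exact ⟨j, fun i hi => (hj i hi).symm, hstep.symm⟩

theorem mem_compOf_self (χ : (Fin d → ℕ) → ℤ) (a : Fin d → ℕ) : a ∈ CompOf χ a :=
  Relation.ReflTransGen.refl

theorem compOf_eq_of_gridAdj (χ : (Fin d → ℕ) → ℤ) {a a' : Fin d → ℕ}
    (hadj : GridAdj a a') (h : χ a' = χ a) : CompOf χ a = CompOf χ a' := by
  unfold CompOf
  rw [h]
  ext x
  exact ⟨.head ⟨hadj.symm, h, rfl⟩, .head ⟨hadj, rfl, h⟩⟩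

theorem exists_gridAdj_le_sum_sub_lt {a b : Fin d → ℕ} (hab : a ≤ b) (hne : a ≠ b) :
    ∃ a', GridAdj a a' ∧ a ≤ a' ∧ a' ≤ b ∧ ∑ i, (b i - a' i) < ∑ i, (b i - a i) := by
  obtain ⟨j, hj⟩ : ∃ j, a j < b j := by
    by_contra! h
    exact hne (le_antisymm hab h)
  have haa' : a ≤ Function.update a j (a j + 1) := le_update_self_iff.mpr (Nat.le_succ _)
  refine ⟨Function.update a j (a j + 1), ⟨j, fun i hi => by simp [hi], by simp⟩, haa',
    update_le_iff.mpr ⟨hj, fun i _ => hab i⟩, Finset.sum_lt_sum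
      (fun i _ => Nat.sub_le_sub_left (haa' i) _) ⟨j, Finset.mem_univ j, ?_⟩⟩
  rw [Function.update_self]
  exact Nat.sub_lt_sub_left hj (Nat.lt_succ_self _)

variable (r : ℕ) (χ : (Fin d → ℕ) → ℤ)

abbrev IchiOn (p q : Set (Fin d → ℕ)) : Prop :=
  p ∈ Pchi r χ ∧ q ∈ Pchi r χ ∧ Ichi χ p q

variable {r χ}

theorem ichiOn_compOf_of_gridAdj {a a' : Fin d → ℕ} (hadj : GridAdj a a') (haa' : a ≤ a')
    (hlt : χ a' < χ a) (ha' : 1 ≤ χ a') (ha : χ a ≤ (r : ℤ) - 1) :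
    IchiOn r χ (CompOf χ a) (CompOf χ a') :=
  ⟨⟨a, ha'.trans hlt.le, ha, rfl⟩, ⟨a', ha', hlt.le.trans ha, rfl⟩,
    a, mem_compOf_self χ a, a', mem_compOf_self χ a', hadj, haa', hlt⟩

theorem reflTransGen_ichiOn_compOf_of_le (hχ : Antitone χ) {a b : Fin d → ℕ} (hab : a ≤ b)
    (hb : 1 ≤ χ b) (ha : χ a ≤ (r : ℤ) - 1) :
    Relation.ReflTransGen (IchiOn r χ) (CompOf χ a) (CompOf χ b) := by
  by_cases heq : a = b
  · rw [heq]
  obtain ⟨a', hadj, haa', ha'b, hdec⟩ := exists_gridAdj_le_sum_sub_lt hab heq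
  have ih := reflTransGen_ichiOn_compOf_of_le hχ ha'b hb ((hχ haa').trans ha)
  rcases (hχ haa').eq_or_lt with h | h
  · rwa [compOf_eq_of_gridAdj χ hadj h]
  · exact .head (ichiOn_compOf_of_gridAdj hadj haa' h (hb.trans (hχ ha'b)) ha) ih
termination_by ∑ i, (b i - a i)
decreasing_by exact hdec

end

theorem statement3_general {r d : ℕ}
    (χ : (Fin d → ℕ) → ℤ) (hχ : IsCharFun r d χ)
    (a b : Fin d → ℕ) (hab : a ≤ b)
    (hb1 : 1 ≤ χ b) (har : χ a ≤ (r : ℤ) - 1)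
    (hne : CompOf χ a ≠ CompOf χ b) :
    Relation.TransGen
      (fun p q : Set (Fin d → ℕ) => p ∈ Pchi r χ ∧ q ∈ Pchi r χ ∧ Ichi χ p q)
      (CompOf χ a) (CompOf χ b) := by
  have hanti : Antitone χ := fun x y hxy => hχ.2.2 x y hxy
  exact (Relation.reflTransGen_iff_eq_or_transGen.mp
    (reflTransGen_ichiOn_compOf_of_le hanti hab hb1 har)).resolve_left hne.symm

/-- Let `χ` be a characteristic function with parameters `r, d`, and let
`a, b ∈ ℕ^d` satisfy `a ≤ b`, `1 ≤ χ(b)`, `χ(a) ≤ r−1`, and `[a] ≠ [b]`.  Then the pair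
`([a], [b])` lies in the transitive closure of the relation `I_χ` on `P_χ`. -/
theorem statement3 {r d : ℕ} (hr : 1 ≤ r) (hd : 1 ≤ d)
    (χ : (Fin d → ℕ) → ℤ) (hχ : IsCharFun r d χ)
    (a b : Fin d → ℕ) (hab : a ≤ b)
    (hb1 : 1 ≤ χ b) (har : χ a ≤ (r : ℤ) - 1)
    (hne : CompOf χ a ≠ CompOf χ b) :
    Relation.TransGen
      (fun p q : Set (Fin d → ℕ) => p ∈ Pchi r χ ∧ q ∈ Pchi r χ ∧ Ichi χ p q)
      (CompOf χ a) (CompOf χ b) :=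
  statement3_general χ hχ a b hab hb1 har hne
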